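/- For every integer s ≥ 1, the (2s-1)-th derivative of z ↦ cot(πz) evaluated at z = 1/4 is strictly negative. -/

import Mathlib

/-!
Differentiating `cot' = -(1 + cot²)` repeatedly gives
`dⁿ/dzⁿ cot (π z) = (-π)ⁿ Pₙ(cot (π z))` with `P₀ = X` and `Pₙ₊₁ = (1 + X²) Pₙ'`.
Every `Pₙ` has nonnegative coefficients and a positive coefficient in degree `n + 1`,
so `Pₙ(1) > 0`.
Since `cot (π / 4) = 1` and `(-π)ⁿ < 0` for odd `n`, the claim follows.
-/

open Real Polynomial

namespace Polynomial

variable {R : Type*} [CommSemiring R] [PartialOrder R] [IsStrictOrderedRing R]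

theorem coeff_mul_nonneg {p q : R[X]} (hp : ∀ k, 0 ≤ p.coeff k) (hq : ∀ k, 0 ≤ q.coeff k)
    (k : ℕ) : 0 ≤ (p * q).coeff k := by
  rw [coeff_mul]
  exact Finset.sum_nonneg fun ij _ => mul_nonneg (hp ij.1) (hq ij.2)

theorem coeff_derivative_nonneg {p : R[X]} (hp : ∀ k, 0 ≤ p.coeff k) (k : ℕ) :
    0 ≤ (derivative p).coeff k := by
  rw [coeff_derivative]
  exact mul_nonneg (hp _) (by positivity)

theorem eval_pos_of_coeff_nonneg {p : R[X]} {x : R} (hx : 0 < x) (hp : ∀ k, 0 ≤ p.coeff k)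
    {m : ℕ} (hm : 0 < p.coeff m) : 0 < p.eval x := by
  rw [eval_eq_sum]
  calc 0 < p.coeff m * x ^ m := mul_pos hm (pow_pos hx m)
    _ ≤ p.sum fun e a => a * x ^ e :=
      Finset.single_le_sum (fun k _ => mul_nonneg (hp k) (pow_pos hx k).le)
        (mem_support_iff.mpr hm.ne')

end Polynomial

noncomputable def cotDerivPoly : ℕ → ℝ[X]
  | 0 => X
  | n + 1 => (1 + X ^ 2) * derivative (cotDerivPoly n)

theorem cotDerivPoly_coeff_nonneg (n k : ℕ) : 0 ≤ (cotDerivPoly n).coeff k := by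
  induction n generalizing k with
  | zero => rw [cotDerivPoly, coeff_X]; split_ifs <;> norm_num
  | succ n ih =>
    have h : ∀ j, 0 ≤ ((1 : ℝ[X]) + X ^ 2).coeff j := fun j => by
      rw [coeff_add, coeff_one, coeff_X_pow]; split_ifs <;> norm_num
    exact coeff_mul_nonneg h (coeff_derivative_nonneg ih) k

theorem cotDerivPoly_coeff_succ_pos (n : ℕ) : 0 < (cotDerivPoly n).coeff (n + 1) := by
  induction n with
  | zero => simp [cotDerivPoly]
  | succ n ih =>
    have hlead : 0 < (derivative (cotDerivPoly n)).coeff n := by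
      rw [coeff_derivative]; positivity
    rw [cotDerivPoly, add_mul, one_mul, coeff_add, coeff_X_pow_mul]
    exact add_pos_of_nonneg_of_pos (coeff_derivative_nonneg (cotDerivPoly_coeff_nonneg n) _) hlead

theorem cotDerivPoly_eval_one_pos (n : ℕ) : 0 < (cotDerivPoly n).eval 1 :=
  eval_pos_of_coeff_nonneg one_pos (cotDerivPoly_coeff_nonneg n) (cotDerivPoly_coeff_succ_pos n)

theorem Real.hasDerivAt_cot {x : ℝ} (h : sin x ≠ 0) :
    HasDerivAt cot (-(1 + cot x ^ 2)) x := by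
  have hcot : cot = fun y => cos y / sin y := funext cot_eq_cos_div_sin
  rw [hcot]
  refine ((hasDerivAt_cos x).div (hasDerivAt_sin x) h).congr_deriv ?_
  field_simp
  ring

theorem hasDerivAt_cot_pi_mul {x : ℝ} (h : sin (π * x) ≠ 0) :
    HasDerivAt (fun z => cot (π * z)) (-π * (1 + cot (π * x) ^ 2)) x := by
  refine ((hasDerivAt_cot h).comp x ((hasDerivAt_id x).const_mul π)).congr_deriv ?_
  ring

theorem iteratedDeriv_cot_pi_mul (n : ℕ) {x : ℝ} (hx : sin (π * x) ≠ 0) :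
    iteratedDeriv n (fun z => cot (π * z)) x =
      (-π) ^ n * (cotDerivPoly n).eval (cot (π * x)) := by
  induction n generalizing x with
  | zero => simp [cotDerivPoly]
  | succ n ih =>
    have hopen : IsOpen {y : ℝ | sin (π * y) ≠ 0} :=
      isOpen_ne_fun (by fun_prop) continuous_const
    have hnear : iteratedDeriv n (fun z => cot (π * z)) =ᶠ[nhds x]
        fun z => (-π) ^ n * (cotDerivPoly n).eval (cot (π * z)) :=
      Filter.eventually_of_mem (hopen.mem_nhds hx) fun y hy => ih hy
    have hderiv : HasDerivAt (fun z => (-π) ^ n * (cotDerivPoly n).eval (cot (π * z)))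
        ((-π) ^ n * ((derivative (cotDerivPoly n)).eval (cot (π * x)) *
          (-π * (1 + cot (π * x) ^ 2)))) x :=
      (((cotDerivPoly n).hasDerivAt _).comp x (hasDerivAt_cot_pi_mul hx)).const_mul _
    rw [iteratedDeriv_succ, hnear.deriv_eq, hderiv.deriv, cotDerivPoly]
    simp only [eval_mul, eval_add, eval_one, eval_pow, eval_X]
    ring

theorem Real.cot_pi_div_four : cot (π / 4) = 1 := by
  rw [cot_eq_cos_div_sin, cos_pi_div_four, sin_pi_div_four, div_self (by positivity)]

theorem iteratedDeriv_cot_quarter_neg (s : ℕ) (hs : 1 ≤ s) :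
    iteratedDeriv (2 * s - 1) (fun z : ℝ => Real.cot (π * z)) (1/4) < 0 := by
  have hquarter : π * (1 / 4) = π / 4 := by ring
  have hsin : sin (π * (1 / 4)) ≠ 0 := by rw [hquarter, sin_pi_div_four]; positivity
  have hodd : Odd (2 * s - 1) := ⟨s - 1, by omega⟩
  rw [iteratedDeriv_cot_pi_mul _ hsin, hquarter, cot_pi_div_four, hodd.neg_pow]
  exact mul_neg_of_neg_of_pos (neg_neg_of_pos (pow_pos pi_pos _)) (cotDerivPoly_eval_one_pos _)
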